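/- arXiv:0804.1355 — 3 statements merged into one kernel-verified Lean document; each statement's English description precedes it below -/
import Mathlib

section
/- (Gauss's Lemma variant for cyclotomic integers) Let q and r be primes with r = nq + 1 for some positive integer n, let b ∈ Z/rZ with b ≠ 1 and b^q = 1, and let φ: Z[ζ_q] → Z/rZ be the ring homomorphism sending ζ_q to b. Let d(t) ∈ Z[ζ_q][t] have degree 2k, and suppose φ applied coefficientwise to d(t) also has degree 2k. If d(t) = λ t^m f(t) \overline{f(t)} for some λ ∈ Q(ζ_q), m ∈ Z, and f ∈ Q(ζ_q)[t, t^{-1}] (i.e., d is a norm over Q(ζ_q)), then φ(d(t)) factors in (Z/rZ)[t] as a product of two polynomials each of degree k. -/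
open Polynomial LaurentPolynomial

/-!
Over `K = ℚ(ζ_q)` write `f = F(t) t^u` with `F` a polynomial of degree `e` and `F(0) ≠ 0`. Then
`f̄ = F*(t) t^(-u-e)`, where `F*` is the reversed conjugate of `F`, again of degree `e` with
`F*(0) ≠ 0`. Hence `d = λ F F* t^j` with `2k = 2e + j`, and splitting `t^j` evenly factors `d`
over `K` into two factors `G`, `H` of degree `k`.

Since `ℤ[ζ_q]` is infinite and `ℤ/rℤ` is finite, `ker φ` is a nonzero prime of the Dedekind
domain `ℤ[ζ_q]`, so `φ` factors through the discrete valuation ring `S` obtained by localizing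
at it. Rescale `G` and `H` to `G', H' ∈ S[t]` each having some coefficient equal to `1`, so that
`G' H' = c d`. Either `c` or `c⁻¹` lies in `S`, and `G', H'` stay nonzero modulo the maximal
ideal, so reducing gives `φ(d) = g h` with `deg g, deg h ≤ k`; as `deg φ(d) = 2k`, both are `k`.
-/

theorem LaurentPolynomial.exists_eq_toLaurent_mul_T {R : Type*} [CommRing R] {f : R[T;T⁻¹]}
    (hf : f ≠ 0) : ∃ (F : R[X]) (u : ℤ), F.coeff 0 ≠ 0 ∧ f = toLaurent F * T u := by
  obtain ⟨n, F', hF'⟩ := exists_T_pow f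
  have hF'0 : F' ≠ 0 := by
    rintro rfl
    exact hf (((isUnit_T (n : ℤ)).mul_left_eq_zero).mp (by rw [← hF', map_zero]))
  obtain ⟨F, hF, hXF⟩ := exists_eq_pow_rootMultiplicity_mul_and_not_dvd F' hF'0 0
  rw [map_zero, sub_zero] at hF hXF
  rw [X_dvd_iff] at hXF
  generalize F'.rootMultiplicity 0 = t at hF
  refine ⟨F, t - n, hXF, ?_⟩
  calc f = f * T n * T (-n) := by rw [mul_T_assoc, add_neg_cancel, T_zero, mul_one]
    _ = toLaurent F * T (t - n) := by
      rw [← hF', hF, map_mul, map_pow, toLaurent_X, T_pow, mul_one, mul_comm (T t), mul_T_assoc,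
        ← sub_eq_add_neg]

theorem Polynomial.exists_eq_mul_X_pow_of_toLaurent_eq {R : Type*} [Semiring R] {p Q : R[X]}
    {w : ℤ} (h : toLaurent p = toLaurent Q * T w) (hQ : Q.coeff 0 ≠ 0) :
    ∃ j : ℕ, p = Q * X ^ j := by
  obtain ⟨j, rfl | rfl⟩ := Int.eq_nat_or_neg w
  · exact ⟨j, toLaurent_injective (by rw [h, map_mul, toLaurent_X_pow])⟩
  · have hQp : Q = p * X ^ j := toLaurent_injective <| by
      rw [map_mul, toLaurent_X_pow, h, mul_T_assoc, neg_add_cancel, T_zero, mul_one]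
    obtain rfl | hj := j.eq_zero_or_pos
    · exact ⟨0, by simpa using hQp.symm⟩
    · exact absurd (by rw [hQp, coeff_mul_X_pow', if_neg (by omega)]) hQ

section Conjugation

variable {R : Type*} [CommRing R] (σ : R ≃+* R) (conj : R[T;T⁻¹] ≃+* R[T;T⁻¹])

theorem conj_T (hconjT : conj (T 1) = T (-1)) (n : ℤ) : conj (T n) = T (-n) := by
  have hnat (m : ℕ) : conj (T m) = T (-m) := by
    rw [← mul_one (m : ℤ), ← T_pow, map_pow, hconjT, T_pow, mul_neg_one, mul_one]
  obtain ⟨m, rfl | rfl⟩ := Int.eq_nat_or_neg n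
  · exact hnat m
  · have hinv : conj (T (-m)) * conj (T m) = 1 := by
      rw [← map_mul, ← T_add, neg_add_cancel, T_zero, map_one]
    rw [hnat] at hinv
    calc conj (T (-m)) = conj (T (-m)) * T (-m) * T m := by rw [mul_T_assoc]; simp
      _ = T (-(-m : ℤ)) := by rw [hinv, one_mul, neg_neg]

theorem T_mul_conj_T (hconjT : conj (T 1) = T (-1)) (n : ℤ) : T n * conj (T n) = 1 := by
  rw [conj_T conj hconjT, ← T_add, add_neg_cancel, T_zero]

theorem conj_toLaurent (hconjC : ∀ a, conj (LaurentPolynomial.C a) = LaurentPolynomial.C (σ a))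
    (hconjT : conj (T 1) = T (-1)) (p : R[X]) :
    conj (toLaurent p) = invert (toLaurent (p.map (σ : R →+* R))) := by
  have hcomp : (conj : R[T;T⁻¹] →+* R[T;T⁻¹]).comp toLaurent =
      (invert : R[T;T⁻¹] ≃ₐ[R] R[T;T⁻¹]).toRingEquiv.toRingHom.comp
        (toLaurent.comp (mapRingHom (σ : R →+* R))) := by
    ext a
    · simp [hconjC]
    · simp [hconjT]
  exact DFunLike.congr_fun hcomp p

theorem conj_toLaurent_mul_T
    (hconjC : ∀ a, conj (LaurentPolynomial.C a) = LaurentPolynomial.C (σ a))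
    (hconjT : conj (T 1) = T (-1)) (p : R[X]) :
    conj (toLaurent p) * T p.natDegree = toLaurent (p.map (σ : R →+* R)).reverse := by
  rw [toLaurent_reverse, natDegree_map_eq_of_injective σ.injective,
    conj_toLaurent σ conj hconjC hconjT]

theorem exists_toLaurent_eq_mul_reverse_mul_T_of_norm
    (hconjC : ∀ a, conj (LaurentPolynomial.C a) = LaurentPolynomial.C (σ a))
    (hconjT : conj (T 1) = T (-1)) {p : R[X]} {lam : R} {m : ℤ}
    {f : R[T;T⁻¹]} (hf : f ≠ 0)
    (hp : toLaurent p = LaurentPolynomial.C lam * T m * f * conj f) :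
    ∃ (F : R[X]) (w : ℤ), F.coeff 0 ≠ 0 ∧
      toLaurent p = toLaurent (Polynomial.C lam * F * (F.map (σ : R →+* R)).reverse) * T w := by
  obtain ⟨F, u, hF0, rfl⟩ := exists_eq_toLaurent_mul_T hf
  refine ⟨F, m - F.natDegree, hF0, ?_⟩
  simp only [hp, map_mul, toLaurent_C]
  rw [← conj_toLaurent_mul_T σ conj hconjC hconjT]
  have hTm : (T m : R[T;T⁻¹]) = T F.natDegree * T (m - F.natDegree) := by
    rw [← T_add, add_sub_cancel]
  calc _ = LaurentPolynomial.C lam * T m * toLaurent F * conj (toLaurent F) *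
        (T u * conj (T u)) := by ring
    _ = _ := by
      rw [T_mul_conj_T conj hconjT, mul_one, hTm]
      ring

theorem exists_mul_eq_natDegree_eq_of_norm [IsDomain R]
    (hconjC : ∀ a, conj (LaurentPolynomial.C a) = LaurentPolynomial.C (σ a))
    (hconjT : conj (T 1) = T (-1)) {p : R[X]} {k : ℕ}
    (hp : p.natDegree = 2 * k)
    (hnorm : ∃ (lam : R) (m : ℤ) (f : R[T;T⁻¹]),
      toLaurent p = LaurentPolynomial.C lam * T m * f * conj f) :
    ∃ G H : R[X], p = G * H ∧ G.natDegree = k ∧ H.natDegree = k := by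
  obtain ⟨lam, m, f, hpf⟩ := hnorm
  by_cases hp0 : p = 0
  · exact ⟨0, 0, by rw [hp0, mul_zero], by simp_all, by simp_all⟩
  have hlam : lam ≠ 0 := by
    rintro rfl
    exact hp0 (toLaurent_eq_zero.mp (by rw [hpf, map_zero, zero_mul, zero_mul, zero_mul]))
  have hf : f ≠ 0 := by
    rintro rfl
    exact hp0 (toLaurent_eq_zero.mp (by rw [hpf, mul_zero, zero_mul]))
  obtain ⟨F, w, hF0, hpw⟩ :=
    exists_toLaurent_eq_mul_reverse_mul_T_of_norm σ conj hconjC hconjT hf hpf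
  set F' := (F.map (σ : R →+* R)).reverse
  have hFσ0 : (F.map (σ : R →+* R)).coeff 0 ≠ 0 := by
    rw [coeff_map, RingEquiv.coe_toRingHom]
    exact (map_ne_zero_iff _ σ.injective).mpr hF0
  have hF'0 : F'.coeff 0 ≠ 0 := by
    rw [coeff_zero_reverse, leadingCoeff_ne_zero]
    exact fun h => hFσ0 (by rw [h, coeff_zero])
  have hF'deg : F'.natDegree = F.natDegree := by
    rw [reverse_natDegree, natDegree_map_eq_of_injective σ.injective,
      natTrailingDegree_eq_zero.mpr (Or.inr hFσ0), Nat.sub_zero]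
  have hne {g : R[X]} (hg : g.coeff 0 ≠ 0) : g ≠ 0 := fun h => hg (by rw [h, coeff_zero])
  have hlamF : Polynomial.C lam * F ≠ 0 := mul_ne_zero (C_ne_zero.mpr hlam) (hne hF0)
  obtain ⟨j, rfl⟩ := exists_eq_mul_X_pow_of_toLaurent_eq hpw
    (by simp [mul_coeff_zero, hlam, hF0, hF'0])
  have hdeg : 2 * k = F.natDegree + F.natDegree + j := by
    rw [← hp, natDegree_mul_X_pow _ (mul_ne_zero hlamF (hne hF'0)),
      natDegree_mul hlamF (hne hF'0), natDegree_C_mul hlam, hF'deg]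
  refine ⟨Polynomial.C lam * F * X ^ (k - F.natDegree), F' * X ^ (k - F.natDegree), ?_, ?_, ?_⟩
  · rw [show j = (k - F.natDegree) + (k - F.natDegree) by omega, pow_add]
    ring
  · rw [natDegree_mul_X_pow _ hlamF, natDegree_C_mul hlam]
    omega
  · rw [natDegree_mul_X_pow _ (hne hF'0), hF'deg]
    omega

end Conjugation

section GaussLemma

variable {S K F : Type*} [CommRing S] [IsDomain S] [ValuationRing S] [Field K] [Algebra S K]
  [IsFractionRing S K] [Field F]

theorem ValuationRing.exists_map_eq_C_mul_of_coeff_eq_one {p : K[X]} (hp : p ≠ 0) :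
    ∃ (c : K) (p' : S[X]) (i : ℕ),
      c ≠ 0 ∧ p'.map (algebraMap S K) = Polynomial.C c * p ∧ p'.coeff i = 1 := by
  set v := ValuationRing.valuation S K
  obtain ⟨i, hi, hmax⟩ :=
    p.support.exists_max_image (fun j => v (p.coeff j)) (nonempty_support_iff.mpr hp)
  have hpi : p.coeff i ≠ 0 := mem_support_iff.mp hi
  have hlifts : Polynomial.C (p.coeff i)⁻¹ * p ∈ lifts (algebraMap S K) := by
    refine (lifts_iff_coeff_lifts _).mpr fun j => ?_
    rw [coeff_C_mul, Set.mem_range, ← ValuationRing.mem_integer_iff, Valuation.mem_integer_iff,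
      map_mul, map_inv₀]
    by_cases hj : j ∈ p.support
    · exact (inv_mul_le_one₀ ((Valuation.pos_iff v).mpr hpi)).mpr (hmax j hj)
    · rw [notMem_support_iff.mp hj, map_zero, mul_zero]
      exact zero_le
  obtain ⟨p', hp'⟩ := (mem_lifts _).mp hlifts
  refine ⟨(p.coeff i)⁻¹, p', i, inv_ne_zero hpi, hp', IsFractionRing.injective S K ?_⟩
  rw [← coeff_map, hp', coeff_C_mul, inv_mul_cancel₀ hpi, map_one]

theorem ValuationRing.exists_map_eq_mul_natDegree_le (ψ : S →+* F) {D : S[X]} {G H : K[X]}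
    (hD : D.map (algebraMap S K) = G * H) :
    ∃ g h : F[X],
      D.map ψ = g * h ∧ g.natDegree ≤ G.natDegree ∧ h.natDegree ≤ H.natDegree := by
  have hinj := IsFractionRing.injective S K
  by_cases hGH : G * H = 0
  · refine ⟨0, 0, ?_, by simp, by simp⟩
    rw [(Polynomial.map_eq_zero_iff hinj).mp (hD.trans hGH), Polynomial.map_zero, mul_zero]
  obtain ⟨hG, hH⟩ := mul_ne_zero_iff.mp hGH
  obtain ⟨cG, G', iG, hcG, hG', hG'1⟩ := exists_map_eq_C_mul_of_coeff_eq_one (S := S) hG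
  obtain ⟨cH, H', iH, hcH, hH', hH'1⟩ := exists_map_eq_C_mul_of_coeff_eq_one (S := S) hH
  have hdeg {P : K[X]} {P' : S[X]} {c : K} (h : P'.map (algebraMap S K) = Polynomial.C c * P) :
      P'.natDegree ≤ P.natDegree := by
    rw [← natDegree_map_eq_of_injective hinj, h]
    exact natDegree_C_mul_le _ _
  have hψ {P : S[X]} {i : ℕ} (h1 : P.coeff i = 1) : P.map ψ ≠ 0 := fun h0 =>
    one_ne_zero (by rw [← map_one ψ, ← h1, ← coeff_map, h0, coeff_zero])
  have hkey : (G' * H').map (algebraMap S K) =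
      Polynomial.C (cG * cH) * D.map (algebraMap S K) := by
    rw [Polynomial.map_mul, hG', hH', hD, C_mul]
    ring
  obtain ⟨u, hu⟩ : ∃ u : F, D.map ψ = Polynomial.C u * (G'.map ψ * H'.map ψ) := by
    rcases ValuationRing.isInteger_or_isInteger S (cG * cH) with ⟨e, he⟩ | ⟨e, he⟩
    · have hGHe : G' * H' = Polynomial.C e * D := map_injective _ hinj <| by
        rw [hkey, Polynomial.map_mul, map_C, he]
      have hψGH := congrArg (Polynomial.map ψ) hGHe
      rw [Polynomial.map_mul, Polynomial.map_mul, map_C] at hψGH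
      have hψe : ψ e ≠ 0 := fun he0 =>
        mul_ne_zero (hψ hG'1) (hψ hH'1) (by rw [hψGH, he0, C_0, zero_mul])
      refine ⟨(ψ e)⁻¹, ?_⟩
      rw [hψGH, ← mul_assoc, ← C_mul, inv_mul_cancel₀ hψe, C_1, one_mul]
    · have hDe : D = Polynomial.C e * (G' * H') := map_injective _ hinj <| by
        rw [Polynomial.map_mul, map_C, he, hkey, ← mul_assoc, ← C_mul,
          inv_mul_cancel₀ (mul_ne_zero hcG hcH), C_1, one_mul]
      exact ⟨ψ e, by rw [hDe, Polynomial.map_mul, Polynomial.map_mul, map_C]⟩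
  refine ⟨Polynomial.C u * G'.map ψ, H'.map ψ, by rw [hu, mul_assoc], ?_, ?_⟩
  · exact (natDegree_C_mul_le _ _).trans (natDegree_map_le.trans (hdeg hG'))
  · exact natDegree_map_le.trans (hdeg hH')

end GaussLemma

theorem IsDedekindDomain.exists_map_eq_mul_natDegree_le {O K F : Type*} [CommRing O]
    [IsDedekindDomain O] [Field K] [Algebra O K] [IsFractionRing O K] [Field F] (φ : O →+* F)
    (hφ : RingHom.ker φ ≠ ⊥) {D : O[X]} {G H : K[X]} (hD : D.map (algebraMap O K) = G * H) :
    ∃ g h : F[X],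
      D.map φ = g * h ∧ g.natDegree ≤ G.natDegree ∧ h.natDegree ≤ H.natDegree := by
  set P := RingHom.ker φ
  have : P.IsPrime := RingHom.ker_isPrime φ
  let S := Localization.subalgebra.ofField K P.primeCompl P.primeCompl_le_nonZeroDivisors
  have : IsDiscreteValuationRing S :=
    IsLocalization.AtPrime.isDiscreteValuationRing_of_dedekind_domain O hφ S
  have hunit (y : P.primeCompl) : IsUnit (φ y) := isUnit_iff_ne_zero.mpr y.2
  obtain ⟨g, h, hgh, hg, hh⟩ := ValuationRing.exists_map_eq_mul_natDegree_le
    (IsLocalization.lift (S := S) hunit) (D := D.map (algebraMap O S))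
    (by rw [Polynomial.map_map, ← IsScalarTower.algebraMap_eq O S K, hD])
  refine ⟨g, h, ?_, hg, hh⟩
  rwa [Polynomial.map_map, IsLocalization.lift_comp] at hgh

theorem stmt14_general (q r : ℕ) (hq : q.Prime) (hr : r.Prime)
    (ζ : CyclotomicField q ℚ) (hζ : IsPrimitiveRoot ζ q)
    (σ : CyclotomicField q ℚ ≃+* CyclotomicField q ℚ)
    (conj : LaurentPolynomial (CyclotomicField q ℚ) ≃+*
            LaurentPolynomial (CyclotomicField q ℚ))
    (hconjC : ∀ a, conj (LaurentPolynomial.C a) = LaurentPolynomial.C (σ a))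
    (hconjT : conj (T 1) = T (-1))
    (φ : (Algebra.adjoin ℤ ({ζ} : Set (CyclotomicField q ℚ))) →+* ZMod r)
    (d : Polynomial (Algebra.adjoin ℤ ({ζ} : Set (CyclotomicField q ℚ))))
    (k : ℕ) (hd : d.natDegree = 2 * k) (hdφ : (d.map φ).natDegree = 2 * k)
    (hnorm : ∃ (lam : CyclotomicField q ℚ) (m : ℤ)
        (f : LaurentPolynomial (CyclotomicField q ℚ)),
      (d.map (algebraMap (Algebra.adjoin ℤ ({ζ} : Set (CyclotomicField q ℚ)))
          (CyclotomicField q ℚ))).toLaurent =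
        LaurentPolynomial.C lam * T m * f * conj f) :
    ∃ g h : Polynomial (ZMod r),
      d.map φ = g * h ∧ g.natDegree = k ∧ h.natDegree = k := by
  have : Fact q.Prime := ⟨hq⟩
  have : IsCyclotomicExtension {q} ℚ (CyclotomicField q ℚ) :=
    CyclotomicField.isCyclotomicExtension q ℚ
  have : Fact r.Prime := ⟨hr⟩
  have : IsIntegralClosure (Algebra.adjoin ℤ {ζ}) ℤ (CyclotomicField q ℚ) :=
    IsCyclotomicExtension.Rat.isIntegralClosure_adjoin_singleton_of_prime hζ
  have : IsDedekindDomain (Algebra.adjoin ℤ {ζ}) :=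
    IsIntegralClosure.isDedekindDomain ℤ ℚ (CyclotomicField q ℚ) _
  have : IsFractionRing (Algebra.adjoin ℤ {ζ}) (CyclotomicField q ℚ) :=
    IsIntegralClosure.isFractionRing_of_finite_extension ℤ ℚ (CyclotomicField q ℚ) _
  have : Infinite (Algebra.adjoin ℤ {ζ}) := Infinite.of_injective _ Nat.cast_injective
  have hφ : RingHom.ker φ ≠ ⊥ := fun h =>
    not_injective_infinite_finite φ ((RingHom.injective_iff_ker_eq_bot φ).mpr h)
  obtain ⟨G, H, hGH, hG, hH⟩ := exists_mul_eq_natDegree_eq_of_norm σ conj hconjC hconjT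
    (by rwa [natDegree_map_eq_of_injective (IsFractionRing.injective _ _)]) hnorm
  obtain ⟨g, h, hgh, hg, hh⟩ := IsDedekindDomain.exists_map_eq_mul_natDegree_le φ hφ hGH
  have hdeg : 2 * k ≤ g.natDegree + h.natDegree := hdφ ▸ hgh ▸ natDegree_mul_le
  exact ⟨g, h, hgh, by omega, by omega⟩

/-- Gauss's-Lemma variant for cyclotomic integers: if `r = nq + 1` with `q, r` prime,
`φ : Z[ζ_q] → Z/rZ` sends `ζ_q` to an element `b ≠ 1` with `b^q = 1`, and
`d ∈ Z[ζ_q][t]` has degree `2k`, with `φ(d)` also of degree `2k`, then whenever `d` is a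
norm over `Q(ζ_q)` (i.e. `d = λ t^m f(t) f̄(t)` in the Laurent ring), the image `φ(d)`
factors in `(Z/rZ)[t]` as a product of two polynomials of degree `k`. -/
theorem stmt14 (q r n : ℕ) (hq : q.Prime) (hr : r.Prime) (hn : 0 < n)
    (hrq : r = n * q + 1)
    (b : ZMod r) (hb1 : b ≠ 1) (hbq : b ^ q = 1)
    (ζ : CyclotomicField q ℚ) (hζ : IsPrimitiveRoot ζ q)
    (σ : CyclotomicField q ℚ ≃+* CyclotomicField q ℚ)
    (hσ : σ ζ = ζ⁻¹)
    (conj : LaurentPolynomial (CyclotomicField q ℚ) ≃+*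
            LaurentPolynomial (CyclotomicField q ℚ))
    (hconjC : ∀ a, conj (LaurentPolynomial.C a) = LaurentPolynomial.C (σ a))
    (hconjT : conj (T 1) = T (-1))
    (φ : (Algebra.adjoin ℤ ({ζ} : Set (CyclotomicField q ℚ))) →+* ZMod r)
    (hφ : φ ⟨ζ, Algebra.self_mem_adjoin_singleton ℤ ζ⟩ = b)
    (d : Polynomial (Algebra.adjoin ℤ ({ζ} : Set (CyclotomicField q ℚ))))
    (k : ℕ) (hd : d.natDegree = 2 * k) (hdφ : (d.map φ).natDegree = 2 * k)
    (hnorm : ∃ (lam : CyclotomicField q ℚ) (m : ℤ)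
        (f : LaurentPolynomial (CyclotomicField q ℚ)),
      (d.map (algebraMap (Algebra.adjoin ℤ ({ζ} : Set (CyclotomicField q ℚ)))
          (CyclotomicField q ℚ))).toLaurent =
        LaurentPolynomial.C lam * T m * f * conj f) :
    ∃ g h : Polynomial (ZMod r),
      d.map φ = g * h ∧ g.natDegree = k ∧ h.natDegree = k :=
  stmt14_general q r hq hr ζ hζ σ conj hconjC hconjT φ d k hd hdφ hnorm
end

section
/- The polynomial p(t) = t^4 + (ζ^2 + ζ^3 − 1) t^3 + (−2 − ζ^2 − ζ^3) t^2 + (ζ^2 + ζ^3 − 1) t + 1, where ζ = e^{2πi/5}, has coefficients in the real quadratic ring Z[(1+√5)/2], is irreducible over Q(√5), and is not of the form λ t^k f(t) \overline{f(t)} for any λ ∈ Q(ζ_5), k ∈ Z, f ∈ Q(ζ_5)[t, t^{-1}] (with the involution t ↦ t^{-1}, ζ_5 ↦ ζ_5^{-1}). -/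
/-!
With `φ = (1 + √5) / 2` one has `ζ² + ζ³ = -φ`, so `p` is the palindromic quartic
`t⁴ - (φ + 1) t³ + (φ - 2) t² - (φ + 1) t + 1 = t² q(t + t⁻¹)` with
`q(y) = y² - (φ + 1) y + φ - 4`. The discriminant `18 - φ` of `q` has norm `305`, so `q` has no
root in `ℚ(√5)`. A linear factor of `p` over `ℚ(√5)` would give a root `x`, hence a root
`x + x⁻¹` of `q`. The root `y ≈ -0.71` of `q` lies in `(-2, 2)`, so `p` has a root `z` on the unit
circle with `z + z⁻¹ = y`; a quadratic factor over the real field `ℚ(√5)` vanishing at `z` also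
vanishes at `z̄ = z⁻¹`, so its linear coefficient `-y` would again give a root of `q`.

On the unit circle the involution becomes complex conjugation, so `λ t^k f f̄` takes the values
`λ u^k |f(u)|²` there. As `p(1) = -φ - 2 < 0`, `λ` is a negative real; as `p(i) = 4 - φ` is a
nonzero real, `k` is even; and then `p(-1) = 3φ + 2 > 0` is impossible.
-/

open Polynomial LaurentPolynomial

open scoped goldenRatio

theorem Complex.even_of_I_zpow_eq_ofReal {k : ℤ} {r : ℝ} (h : Complex.I ^ k = r) : Even k := by
  rw [Complex.I_zpow_eq_zpow_mod] at h
  have hk : k % 4 = 0 ∨ k % 4 = 1 ∨ k % 4 = 2 ∨ k % 4 = 3 := by omega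
  rcases hk with hk | hk | hk | hk <;> rw [hk] at h
  · rw [Int.even_iff]; omega
  · simpa using congrArg Complex.im h
  · rw [Int.even_iff]; omega
  · simpa [zpow_ofNat, pow_succ] using congrArg Complex.im h

namespace LaurentPolynomial

theorem ringHom_ext {R S : Type*} [CommSemiring R] [Semiring S] {f g : R[T;T⁻¹] →+* S}
    (hC : ∀ a, f (LaurentPolynomial.C a) = g (LaurentPolynomial.C a)) (hT : f (T 1) = g (T 1)) :
    f = g :=
  IsLocalization.ringHom_ext (Submonoid.powers (X : R[X])) <| Polynomial.ringHom_ext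
    (fun a => by simpa [algebraMap_eq_toLaurent] using hC a)
    (by simpa [algebraMap_eq_toLaurent] using hT)

variable {F : Type*} [FunLike F ℂ[T;T⁻¹] ℂ[T;T⁻¹]] [RingHomClass F ℂ[T;T⁻¹] ℂ[T;T⁻¹]] {σ : F}

theorem eval₂_apply_eq_conj
    (hσC : ∀ a, σ (LaurentPolynomial.C a) = LaurentPolynomial.C (starRingEnd ℂ a))
    (hσT : σ (T 1) = T (-1)) {u : ℂˣ} (hu : starRingEnd ℂ u = ↑u⁻¹) (f : ℂ[T;T⁻¹]) :
    eval₂ (RingHom.id ℂ) u (σ f) = starRingEnd ℂ (eval₂ (RingHom.id ℂ) u f) :=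
  RingHom.congr_fun (ringHom_ext
    (f := (eval₂ (RingHom.id ℂ) u).comp (σ : ℂ[T;T⁻¹] →+* ℂ[T;T⁻¹]))
    (g := (starRingEnd ℂ).comp (eval₂ (RingHom.id ℂ) u)) (by simp [hσC]) (by simp [hσT, hu])) f

theorem eval_eq_mul_normSq_of_toLaurent_eq
    (hσC : ∀ a, σ (LaurentPolynomial.C a) = LaurentPolynomial.C (starRingEnd ℂ a))
    (hσT : σ (T 1) = T (-1)) {P : ℂ[X]} {lam : ℂ} {k : ℤ} {f : ℂ[T;T⁻¹]}
    (hP : P.toLaurent = LaurentPolynomial.C lam * T k * f * σ f) {u : ℂˣ}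
    (hu : starRingEnd ℂ u = ↑u⁻¹) :
    P.eval (u : ℂ) = lam * (u : ℂ) ^ k * Complex.normSq (eval₂ (RingHom.id ℂ) u f) := by
  have h := congrArg (eval₂ (RingHom.id ℂ) u) hP
  rwa [eval₂_toLaurent, eval₂_id, map_mul, map_mul, map_mul, eval₂_apply_eq_conj hσC hσT hu,
    mul_assoc _ (eval₂ _ _ f), Complex.mul_conj, eval₂_C, eval₂_T, Units.val_zpow_eq_zpow_val,
    RingHom.id_apply] at h

theorem not_exists_toLaurent_eq_C_mul_T_mul_mul_apply
    (hσC : ∀ a, σ (LaurentPolynomial.C a) = LaurentPolynomial.C (starRingEnd ℂ a))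
    (hσT : σ (T 1) = T (-1)) {P : ℂ[X]} {a b e : ℝ} (ha : a < 0) (hb : 0 < b) (he : e ≠ 0)
    (hP₁ : P.eval 1 = a) (hP₂ : P.eval (-1) = b) (hP₃ : P.eval Complex.I = e) :
    ¬ ∃ (lam : ℂ) (k : ℤ) (f : ℂ[T;T⁻¹]),
      P.toLaurent = LaurentPolynomial.C lam * T k * f * σ f := by
  rintro ⟨lam, k, f, hf⟩
  set n : ℂˣ → ℝ := fun u => Complex.normSq (eval₂ (RingHom.id ℂ) u f)
  have hn : ∀ u, 0 ≤ n u := fun u => Complex.normSq_nonneg _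
  have hval (u : ℂˣ) (hu : starRingEnd ℂ u = ↑u⁻¹) : P.eval (u : ℂ) = lam * (u : ℂ) ^ k * n u :=
    eval_eq_mul_normSq_of_toLaurent_eq hσC hσT hf hu
  have h₁ : (a : ℂ) = lam * n 1 := by simpa [hP₁] using hval 1 (by simp)
  have hn₁ : (n 1 : ℂ) ≠ 0 := fun h => ha.ne (by simpa [h] using h₁)
  obtain ⟨l, rfl⟩ : ∃ l : ℝ, lam = l :=
    ⟨a / n 1, by push_cast; rw [h₁, mul_div_cancel_right₀ _ hn₁]⟩
  have hl : l < 0 := by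
    have : a = l * n 1 := by exact_mod_cast h₁
    nlinarith [lt_of_le_of_ne (hn 1) (Ne.symm (by exact_mod_cast hn₁))]
  set i : ℂˣ := Units.mk0 _ Complex.I_ne_zero
  have hk : Even k := by
    have h₃ : (e : ℂ) = l * Complex.I ^ k * n i := by simpa [hP₃, i] using hval i (by simp [i])
    have hn₃ : (n i : ℂ) ≠ 0 := fun h => he (by simpa [h] using h₃)
    refine Complex.even_of_I_zpow_eq_ofReal (r := e / (l * n i)) ?_
    push_cast
    rw [eq_div_iff (mul_ne_zero (by exact_mod_cast hl.ne) hn₃), h₃]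
    ring
  have h₂ : (b : ℂ) = l * n (-1) := by simpa [hP₂, hk.neg_one_zpow] using hval (-1) (by simp)
  have : b = l * n (-1) := by exact_mod_cast h₂
  nlinarith [hn (-1)]

end LaurentPolynomial

namespace Polynomial

noncomputable def palindromicQuartic {R : Type*} [Semiring R] (c d : R) : R[X] :=
  X ^ 4 + Polynomial.C c * X ^ 3 + Polynomial.C d * X ^ 2 + Polynomial.C c * X + 1

section Semiring
variable {R S : Type*} [Semiring R] [Semiring S] (c d : R)

@[simp]
theorem eval_palindromicQuartic (x : R) :
    (palindromicQuartic c d).eval x = x ^ 4 + c * x ^ 3 + d * x ^ 2 + c * x + 1 := by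
  simp [palindromicQuartic, eval_X_pow]

theorem palindromicQuartic_map (f : R →+* S) :
    (palindromicQuartic c d).map f = palindromicQuartic (f c) (f d) := by
  simp [palindromicQuartic]

theorem natDegree_palindromicQuartic [Nontrivial R] :
    (palindromicQuartic c d).natDegree = 4 := by
  unfold palindromicQuartic; compute_degree!

theorem monic_palindromicQuartic [Nontrivial R] : (palindromicQuartic c d).Monic := by
  unfold palindromicQuartic; monicity!

end Semiring

theorem eval_palindromicQuartic_eq_mul {K : Type*} [Field K] (c d : K) {x : K} (hx : x ≠ 0) :
    (palindromicQuartic c d).eval x = x ^ 2 * ((x + x⁻¹) ^ 2 + c * (x + x⁻¹) + (d - 2)) := by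
  rw [eval_palindromicQuartic]; field_simp; ring

section RealSubalgebra

variable {R : Type*} [CommRing R] [Algebra R ℂ] {A : Subalgebra R ℂ}

theorem coeff_one_eq_neg_add_conj (hA : ∀ x ∈ A, starRingEnd ℂ x = x) {u : A[X]} (hu : u.Monic)
    (hu₂ : u.natDegree = 2) {z : ℂ} (hz : starRingEnd ℂ z ≠ z)
    (hroot : (u.map (algebraMap A ℂ)).eval z = 0) :
    (u.coeff 1 : ℂ) = -(z + starRingEnd ℂ z) := by
  have hev (w : ℂ) : (u.map (algebraMap A ℂ)).eval w = w ^ 2 + u.coeff 1 * w + u.coeff 0 := by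
    have hc₂ : u.coeff 2 = 1 := hu₂ ▸ hu.coeff_natDegree
    rw [eval_eq_sum_range, hu.natDegree_map, hu₂]
    simp [Finset.sum_range_succ, hc₂]
    ring
  have hroot' : (starRingEnd ℂ z) ^ 2 + u.coeff 1 * starRingEnd ℂ z + u.coeff 0 = 0 := by
    simpa [hev, hA _ (u.coeff _).2] using congrArg (starRingEnd ℂ) hroot
  rw [hev] at hroot
  have : (z - starRingEnd ℂ z) * (z + starRingEnd ℂ z + u.coeff 1) = 0 := by
    linear_combination hroot - hroot'
  linear_combination (mul_eq_zero.1 this).resolve_left (sub_ne_zero.2 hz.symm)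

theorem exists_conj_eq_inv_of_sq_lt_four {y : ℝ} (hy : y ^ 2 < 4) :
    ∃ z : ℂ, starRingEnd ℂ z ≠ z ∧ z⁻¹ = starRingEnd ℂ z ∧ z + starRingEnd ℂ z = y := by
  have ht : Real.sqrt (4 - y ^ 2) ^ 2 = 4 - y ^ 2 := Real.sq_sqrt (by linarith)
  refine ⟨⟨y / 2, Real.sqrt (4 - y ^ 2) / 2⟩, ?_, ?_, ?_⟩
  · intro h
    have := congrArg Complex.im h
    simp only [Complex.conj_im] at this
    linarith [Real.sqrt_pos.2 (by linarith : 0 < 4 - y ^ 2)]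
  · rw [Complex.inv_def, Complex.normSq_mk, show y / 2 * (y / 2) + Real.sqrt (4 - y ^ 2) / 2 *
      (Real.sqrt (4 - y ^ 2) / 2) = 1 by nlinarith, inv_one, Complex.ofReal_one, mul_one]
  · apply Complex.ext <;> simp

theorem irreducible_palindromicQuartic (hA : ∀ x ∈ A, starRingEnd ℂ x = x)
    (hA_inv : ∀ x ∈ A, x⁻¹ ∈ A) {c d : A} (hQ : ∀ y ∈ A, y ^ 2 + c * y + (d - 2) ≠ 0) {y : ℝ}
    (hy : y ^ 2 < 4) (hy_root : (y : ℂ) ^ 2 + c * y + (d - 2) = 0) :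
    Irreducible (palindromicQuartic c d) := by
  have hev (x : ℂ) : ((palindromicQuartic c d).map (algebraMap A ℂ)).eval x =
      (palindromicQuartic (c : ℂ) d).eval x := by
    rw [palindromicQuartic_map]; rfl
  have hne : palindromicQuartic c d ≠ 1 := fun h => by
    simpa [h] using natDegree_palindromicQuartic c d
  rw [(monic_palindromicQuartic c d).irreducible_iff_lt_natDegree_lt hne,
    natDegree_palindromicQuartic]
  rintro q hq hdeg ⟨h, hqh⟩
  obtain hq₁ | hq₂ : q.natDegree = 1 ∨ q.natDegree = 2 := by simp at hdeg; omega
  · have hx : (palindromicQuartic (c : ℂ) d).eval (-(q.coeff 0 : ℂ)) = 0 := by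
      rw [← hev, hqh, Polynomial.map_mul, eval_mul, hq.eq_X_add_C hq₁]; simp
    have hx₀ : (-q.coeff 0 : ℂ) ≠ 0 := fun h0 => by simp [h0] at hx
    rw [eval_palindromicQuartic_eq_mul _ _ hx₀] at hx
    exact hQ _ (A.add_mem (neg_mem (q.coeff 0).2) (hA_inv _ (neg_mem (q.coeff 0).2)))
      ((mul_eq_zero.1 hx).resolve_left (pow_ne_zero 2 hx₀))
  · obtain ⟨z, hz, hz_inv, hz_add⟩ := exists_conj_eq_inv_of_sq_lt_four hy
    have hz₀ : z ≠ 0 := fun h0 => hz (by simp [h0])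
    have hgz : ((q * h).map (algebraMap A ℂ)).eval z = 0 := by
      rw [← hqh, hev, eval_palindromicQuartic_eq_mul _ _ hz₀, hz_inv, hz_add, hy_root, mul_zero]
    have hh : h.Monic := hq.of_mul_monic_left (hqh ▸ monic_palindromicQuartic c d)
    have hh₂ : h.natDegree = 2 := by
      have := congrArg natDegree hqh
      rw [hq.natDegree_mul hh, natDegree_palindromicQuartic] at this
      omega
    obtain ⟨u, hu, hu₂, huz⟩ : ∃ u : A[X], u.Monic ∧ u.natDegree = 2 ∧
        (u.map (algebraMap A ℂ)).eval z = 0 := by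
      rw [Polynomial.map_mul, eval_mul] at hgz
      rcases mul_eq_zero.1 hgz with hgz | hgz
      exacts [⟨q, hq, hq₂, hgz⟩, ⟨h, hh, hh₂, hgz⟩]
    refine hQ _ (neg_mem (u.coeff 1).2) ?_
    rw [coeff_one_eq_neg_add_conj hA hu hu₂ hz huz, neg_neg, hz_add, hy_root]

end RealSubalgebra

end Polynomial

theorem Irrational.eq_and_eq_of_add_mul_eq {r : ℝ} (hr : Irrational r) {a b c d : ℚ}
    (h : a + b * r = c + d * r) : a = c ∧ b = d := by
  by_cases hbd : b = d
  · subst hbd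
    exact ⟨by exact_mod_cast add_right_cancel h, rfl⟩
  · refine absurd ?_ (hr.ne_rat ((c - a) / (b - d)))
    have : (b - d : ℝ) ≠ 0 := by exact_mod_cast sub_ne_zero.2 hbd
    push_cast
    rw [eq_div_iff this]
    linarith

theorem exists_eq_add_mul_of_mem_adjoin {L : Type*} [Field L] [CharZero L] {x : L} {q : ℚ}
    (hx : x ^ 2 = q) {z : L} (hz : z ∈ Algebra.adjoin ℚ {x}) : ∃ a b : ℚ, z = a + b * x := by
  induction hz using Algebra.adjoin_induction with
  | mem y hy => exact ⟨0, 1, by simp [Set.mem_singleton_iff.1 hy]⟩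
  | algebraMap r => exact ⟨r, 0, by simp⟩
  | add y w _ _ hy hw =>
    obtain ⟨a, b, rfl⟩ := hy
    obtain ⟨c, d, rfl⟩ := hw
    exact ⟨a + c, b + d, by push_cast; ring⟩
  | mul y w _ _ hy hw =>
    obtain ⟨a, b, rfl⟩ := hy
    obtain ⟨c, d, rfl⟩ := hw
    exact ⟨a * c + q * b * d, a * d + b * c, by push_cast; linear_combination b * d * hx⟩

theorem conj_eq_of_mem_adjoin_ofReal {r : ℝ} {z : ℂ} (hz : z ∈ Algebra.adjoin ℚ {(r : ℂ)}) :
    starRingEnd ℂ z = z := by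
  induction hz using Algebra.adjoin_induction with
  | mem y hy => simp [Set.mem_singleton_iff.1 hy]
  | algebraMap q => simp
  | add y w _ _ hy hw => simp [hy, hw]
  | mul y w _ _ hy hw => simp [hy, hw]

theorem inv_mem_adjoin_of_isIntegral {K L : Type*} [Field K] [Field L] [Algebra K L] {x : L}
    (hx : IsIntegral K x) {z : L} (hz : z ∈ Algebra.adjoin K {x}) : z⁻¹ ∈ Algebra.adjoin K {x} :=
  (Algebra.adjoin K {x}).inv_mem_of_algebraic (x := ⟨z, hz⟩)
    (adjoin_le_integralClosure hx hz).isAlgebraic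

local notation "𝕂" => Algebra.adjoin ℚ ({((Real.sqrt 5 : ℝ) : ℂ)} : Set ℂ)

theorem sqrt_five_sq : ((Real.sqrt 5 : ℝ) : ℂ) ^ 2 = ((5 : ℚ) : ℂ) := by
  norm_cast; simp

theorem isIntegral_sqrt_five : IsIntegral ℚ ((Real.sqrt 5 : ℝ) : ℂ) :=
  ⟨X ^ 2 - Polynomial.C 5, monic_X_pow_sub_C _ two_ne_zero, by simp [sqrt_five_sq]⟩

theorem goldenRatio_mem : (φ : ℂ) ∈ 𝕂 := by
  rw [show (φ : ℂ) = algebraMap ℚ ℂ (1 / 2) + algebraMap ℚ ℂ (1 / 2) * ((Real.sqrt 5 : ℝ) : ℂ) by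
    simp; ring]
  exact add_mem (Subalgebra.algebraMap_mem _ _)
    (mul_mem (Subalgebra.algebraMap_mem _ _) (Algebra.subset_adjoin rfl))

theorem sq_ne_eighteen_sub_goldenRatio {w : ℂ} (hw : w ∈ 𝕂) : w ^ 2 ≠ 18 - φ := by
  obtain ⟨a, b, rfl⟩ := exists_eq_add_mul_of_mem_adjoin sqrt_five_sq hw
  intro h
  have h' : ((a ^ 2 + 5 * b ^ 2 : ℚ) : ℝ) + ((2 * a * b : ℚ) : ℝ) * Real.sqrt 5 =
      ((35 / 2 : ℚ) : ℝ) + ((-1 / 2 : ℚ) : ℝ) * Real.sqrt 5 := by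
    have h5 : Real.sqrt 5 ^ 2 = 5 := Real.sq_sqrt (by norm_num)
    have : ((a : ℝ) + b * Real.sqrt 5) ^ 2 = 18 - φ := by exact_mod_cast h
    push_cast
    linear_combination this - b ^ 2 * h5
  obtain ⟨h₁, h₂⟩ := (Nat.prime_five.irrational_sqrt).eq_and_eq_of_add_mul_eq h'
  have : IsSquare (305 : ℚ) := ⟨a ^ 2 - 5 * b ^ 2, by
    linear_combination (-(a ^ 2 + 5 * b ^ 2) - 35 / 2) * h₁ + (5 * (2 * a * b) - 5 / 2) * h₂⟩
  rw [Rat.isSquare_iff] at this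
  norm_num at this

theorem exp_two_pi_I_div_five_sq_add_cube :
    Complex.exp (2 * Real.pi * Complex.I / 5) ^ 2 + Complex.exp (2 * Real.pi * Complex.I / 5) ^ 3
      = -(φ : ℂ) := by
  have h₂ : Complex.exp (2 * Real.pi * Complex.I / 5) ^ 2 =
      Complex.exp ((4 * Real.pi / 5 : ℝ) * Complex.I) := by
    rw [← Complex.exp_nat_mul]; push_cast; ring_nf
  have h₃ : Complex.exp (2 * Real.pi * Complex.I / 5) ^ 3 =
      Complex.exp (-(4 * Real.pi / 5 : ℝ) * Complex.I) := by
    rw [← Complex.exp_nat_mul, ← mul_one (Complex.exp (-_ * _)), ← Complex.exp_two_pi_mul_I,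
      ← Complex.exp_add]
    push_cast; ring_nf
  rw [h₂, h₃, ← Complex.two_cos, ← Complex.ofReal_cos,
    show 4 * Real.pi / 5 = Real.pi - Real.pi / 5 by ring, Real.cos_pi_sub, Real.cos_pi_div_five]
  push_cast; ring

theorem irreducible_palindromicQuartic_goldenRatio :
    Irreducible (palindromicQuartic (-⟨φ, goldenRatio_mem⟩ - 1 : 𝕂)
      (⟨φ, goldenRatio_mem⟩ - 2)) := by
  have hc : ((-⟨φ, goldenRatio_mem⟩ - 1 : 𝕂) : ℂ) = -φ - 1 := rfl
  have hd : ((⟨φ, goldenRatio_mem⟩ - 2 : 𝕂) : ℂ) = φ - 2 := rfl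
  set r := Real.sqrt (18 - φ)
  have hr : r ^ 2 = 18 - φ := Real.sq_sqrt (by linarith [Real.goldenRatio_lt_two])
  have hr₀ : 0 ≤ r := Real.sqrt_nonneg _
  refine irreducible_palindromicQuartic (fun x hx => conj_eq_of_mem_adjoin_ofReal hx)
    (fun x hx => inv_mem_adjoin_of_isIntegral isIntegral_sqrt_five hx) (y := (φ + 1 - r) / 2)
    (fun y hy h => ?_) ?_ ?_
  · refine sq_ne_eighteen_sub_goldenRatio (w := 2 * y - φ - 1)
      (sub_mem (sub_mem (mul_mem (ofNat_mem _ 2) hy) goldenRatio_mem) (one_mem _)) ?_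
    rw [hc, hd] at h
    linear_combination 4 * h + (by exact_mod_cast Real.goldenRatio_sq : (φ : ℂ) ^ 2 = φ + 1)
  · have : r < φ + 5 := by nlinarith [Real.goldenRatio_pos]
    nlinarith [Real.goldenRatio_lt_two]
  · rw [hc, hd]
    exact_mod_cast (by linear_combination hr / 4 - Real.goldenRatio_sq / 4 :
      ((φ + 1 - r) / 2) ^ 2 + (-φ - 1) * ((φ + 1 - r) / 2) + (φ - 2 - 2) = 0)

/-- The polynomial `p(t) = t^4 + (ζ²+ζ³−1)t³ + (−2−ζ²−ζ³)t² + (ζ²+ζ³−1)t + 1` with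
`ζ = e^{2πi/5}` has coefficients in `Z[(1+√5)/2]`, is irreducible over `Q(√5)`, and is not
a norm `λ t^k f(t) f̄(t)` over `Q(ζ_5)` (involution `t ↦ t⁻¹`, `ζ_5 ↦ ζ_5⁻¹`, i.e. complex
conjugation on coefficients). -/
theorem stmt16 (ζ : ℂ) (hζ : ζ = Complex.exp (2 * Real.pi * Complex.I / 5))
    (P : Polynomial ℂ)
    (hP : P = X ^ 4 + Polynomial.C (ζ ^ 2 + ζ ^ 3 - 1) * X ^ 3 + Polynomial.C (-2 - ζ ^ 2 - ζ ^ 3) * X ^ 2 +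
      Polynomial.C (ζ ^ 2 + ζ ^ 3 - 1) * X + 1)
    (conj : LaurentPolynomial ℂ ≃+* LaurentPolynomial ℂ)
    (hconjC : ∀ a : ℂ, conj (LaurentPolynomial.C a) =
      LaurentPolynomial.C (starRingEnd ℂ a))
    (hconjT : conj (T 1) = T (-1)) :
    (∀ n : ℕ, P.coeff n ∈
      Algebra.adjoin ℤ ({(((1 + Real.sqrt 5) / 2 : ℝ) : ℂ)} : Set ℂ)) ∧
    (∃ g : Polynomial (Algebra.adjoin ℚ ({((Real.sqrt 5 : ℝ) : ℂ)} : Set ℂ)),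
      g.map (algebraMap (Algebra.adjoin ℚ ({((Real.sqrt 5 : ℝ) : ℂ)} : Set ℂ)) ℂ) = P ∧
      Irreducible g) ∧
    ¬ ∃ (lam : ℂ) (k : ℤ) (f : LaurentPolynomial ℂ),
        lam ∈ Algebra.adjoin ℚ ({ζ} : Set ℂ) ∧
        (∀ n : ℤ, f.coeff n ∈ Algebra.adjoin ℚ ({ζ} : Set ℂ)) ∧
        P.toLaurent = LaurentPolynomial.C lam * T k * f * conj f := by
  have hP' : P = palindromicQuartic (-(φ : ℂ) - 1) (φ - 2) := by
    have hζ' : ζ ^ 2 + ζ ^ 3 = -φ := hζ ▸ exp_two_pi_I_div_five_sq_add_cube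
    rw [hP, palindromicQuartic, show ζ ^ 2 + ζ ^ 3 - 1 = -φ - 1 by rw [hζ'],
      show -2 - ζ ^ 2 - ζ ^ 3 = φ - 2 by linear_combination -hζ']
  refine ⟨fun n => ?_, ⟨_, ?_, irreducible_palindromicQuartic_goldenRatio⟩, ?_⟩
  · have hφ : (φ : ℂ) ∈ Algebra.adjoin ℤ {(φ : ℂ)} := Algebra.subset_adjoin rfl
    have : P = (palindromicQuartic (-⟨φ, hφ⟩ - 1 : Algebra.adjoin ℤ {(φ : ℂ)})
        (⟨φ, hφ⟩ - 2)).map (algebraMap _ ℂ) := by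
      rw [palindromicQuartic_map, hP']; rfl
    rw [this, coeff_map]
    exact SetLike.coe_mem _
  · rw [palindromicQuartic_map, hP']; rfl
  · rintro ⟨lam, k, f, -, -, hf⟩
    refine not_exists_toLaurent_eq_C_mul_T_mul_mul_apply hconjC hconjT (a := -φ - 2)
      (b := 3 * φ + 2) (e := 4 - φ) (by linarith [Real.goldenRatio_pos])
      (by linarith [Real.goldenRatio_pos]) (by linarith [Real.goldenRatio_lt_two]) ?_ ?_ ?_
      ⟨lam, k, f, hf⟩ <;>
      simp only [hP', eval_palindromicQuartic, Complex.ofReal_sub, Complex.ofReal_add,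
        Complex.ofReal_mul, Complex.ofReal_neg, Complex.ofReal_ofNat]
    · ring
    · ring
    · linear_combination (Complex.I ^ 2 + φ - 3 - (φ + 1) * Complex.I) * Complex.I_sq
end

section
/- The polynomial 3t^2 + 5t + 3 is irreducible over Q(ζ_3), where ζ_3 is a primitive cube root of unity. Consequently, (t−1)^2 (3t^2 + 5t + 3) is not of the form λ t^k f(t) \overline{f(t)} in Q(ζ_3)[t, t^{-1}], where the involution sends t to t^{-1} and ζ_3 to ζ_3^{-1}. -/
/-!
A root `x` of `q = 3t² + 5t + 3` in `K = ℚ(ζ₃)` would make the discriminant `-11 = (6x + 5)²` a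
square in `K`. Since `K = ℚ(√-3)` is a quadratic extension, the rational non-squares that become
squares in `K` form a single square class, so `(-3)(-11) = 33` would be a rational square.

For the second claim, `q` remains prime in `K[t, t⁻¹]` and the involution fixes it up to the unit
`t⁻²` (its coefficients are rational and palindromic). Hence `q ∣ f ↔ q ∣ f̄`, so `q` divides
`λ tᵏ f f̄` to an even power, whereas it divides `(t - 1)² q` exactly once.
-/

open Polynomial LaurentPolynomial Module

section QuadraticExtension

variable {F K : Type*} [Field F] [Field K] [Algebra F K]

theorem linearIndependent_one_of_sq_eq_algebraMap {u : K} {c : F} (hc : ¬IsSquare c)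
    (hu : u ^ 2 = algebraMap F K c) : LinearIndependent F ![1, u] := by
  refine LinearIndependent.pair_iff.mpr fun s t hst => ?_
  rw [Algebra.smul_def, Algebra.smul_def, mul_one] at hst
  by_cases ht : t = 0
  · subst ht
    simpa using hst
  · refine absurd ⟨-s / t, ?_⟩ hc
    apply (algebraMap F K).injective
    have hu' : u = algebraMap F K (-s / t) := by
      rw [map_div₀, map_neg, eq_div_iff (by simpa using ht)]
      linear_combination hst
    rw [← hu, hu', map_mul, sq]

theorem isSquare_mul_of_finrank_eq_two [NeZero (2 : F)] (hK : finrank F K = 2) {c d : F}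
    (hc : ¬IsSquare c) (hd : ¬IsSquare d) {u v : K} (hu : u ^ 2 = algebraMap F K c)
    (hv : v ^ 2 = algebraMap F K d) : IsSquare (c * d) := by
  have hind := linearIndependent_one_of_sq_eq_algebraMap hc hu
  let B := basisOfLinearIndependentOfCardEqFinrank hind (by simp [hK])
  obtain ⟨a, b, hvab⟩ : ∃ a b : F, v = algebraMap F K a + algebraMap F K b * u := by
    refine ⟨B.repr v 0, B.repr v 1, ?_⟩
    conv_lhs => rw [← B.sum_repr v]
    simp [B, Fin.sum_univ_two, Algebra.smul_def]
  have hcoord : (a ^ 2 + b ^ 2 * c - d) • (1 : K) + (2 * a * b) • u = 0 := by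
    rw [Algebra.smul_def, Algebra.smul_def]
    simp only [map_sub, map_add, map_mul, map_pow, map_ofNat]
    linear_combination hv - algebraMap F K b ^ 2 * hu
      - (v + algebraMap F K a + algebraMap F K b * u) * hvab
  obtain ⟨h0, h1⟩ := LinearIndependent.pair_iff.mp hind _ _ hcoord
  rcases mul_eq_zero.mp h1 with h | rfl
  · rcases mul_eq_zero.mp h with h | rfl
    · exact absurd h two_ne_zero
    · exact ⟨b * c, by linear_combination -c * h0⟩
  · exact absurd ⟨a, by linear_combination -h0⟩ hd

theorem irreducible_three_five_three {K : Type*} [Field K] [Algebra ℚ K]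
    (hK : finrank ℚ K = 2) {w : K} (hw : w ^ 2 = -3) :
    Irreducible (Polynomial.C 3 * X ^ 2 + Polynomial.C 5 * X + Polynomial.C 3 : K[X]) := by
  have := algebraRat.charZero K
  refine irreducible_of_degree_le_three_of_not_isRoot
    (by rw [natDegree_quadratic three_ne_zero]; decide) fun x hx => ?_
  have hdiscr : discrim (3 : K) 5 3 = (2 * 3 * x + 5) ^ 2 :=
    discrim_eq_sq_of_quadratic_eq_zero (by simpa [sq] using hx)
  have h33 : IsSquare ((-3) * (-11) : ℚ) :=
    isSquare_mul_of_finrank_eq_two hK (not_isSquare_of_neg (by norm_num))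
      (not_isSquare_of_neg (by norm_num)) (v := 2 * 3 * x + 5)
      (by rw [hw]; simp) (by rw [← hdiscr, discrim]; norm_num)
  rw [show (-3) * (-11) = ((33 : ℕ) : ℚ) by norm_num, Rat.isSquare_natCast_iff] at h33
  obtain ⟨r, hr⟩ := h33
  exact Nat.not_exists_sq (m := 5) (by norm_num) (by norm_num) ⟨r, hr.symm⟩

theorem finrank_cyclotomicField_three : finrank ℚ (CyclotomicField 3 ℚ) = 2 := by
  -- `CyclotomicField` has its own `ℚ`-algebra instance, not syntactically `DivisionRing.toRatAlgebra`
  have : IsCyclotomicExtension {3} ℚ (CyclotomicField 3 ℚ) := by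
    convert CyclotomicField.isCyclotomicExtension 3 ℚ
    · rfl
    · exact Subsingleton.elim _ _
  rw [IsCyclotomicExtension.finrank _ (cyclotomic.irreducible_rat three_pos)]
  decide

theorem IsPrimitiveRoot.two_mul_add_one_sq {R : Type*} [CommRing R] [IsDomain R] {ζ : R}
    (hζ : IsPrimitiveRoot ζ 3) : (2 * ζ + 1) ^ 2 = -3 := by
  have := hζ.geom_sum_eq_zero (by norm_num)
  simp only [Finset.sum_range_succ, Finset.sum_range_zero] at this
  linear_combination 4 * this

namespace Polynomial

variable {R : Type*} [CommSemiring R] {p : R[X]}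

theorem dvd_of_toLaurent_dvd (hp : Prime p) (hpX : ¬p ∣ X) {r : R[X]}
    (h : toLaurent p ∣ toLaurent r) : p ∣ r := by
  obtain ⟨g, hg⟩ := h
  obtain ⟨n, G, hG⟩ := g.exists_T_pow
  have hrG : r * X ^ n = p * G :=
    toLaurent_injective (by rw [map_mul, map_mul, toLaurent_X_pow, hG, hg, mul_assoc])
  exact (hp.dvd_or_dvd ⟨G, hrG⟩).resolve_right fun h => hpX (hp.dvd_of_dvd_pow h)

theorem prime_toLaurent (hp : Prime p) (hpX : ¬p ∣ X) : Prime (toLaurent p) := by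
  have dvd_toLaurent_iff {f : R[T;T⁻¹]} {n : ℕ} {F : R[X]} (hF : toLaurent F = f * T n) :
      toLaurent p ∣ f ↔ p ∣ F := by
    rw [← (isUnit_T (n : ℤ)).dvd_mul_right, ← hF]
    exact ⟨dvd_of_toLaurent_dvd hp hpX, _root_.map_dvd toLaurent⟩
  refine ⟨by simpa using hp.ne_zero, fun hu => hp.not_isUnit ?_, fun a b hab => ?_⟩
  · exact isUnit_of_dvd_one (dvd_of_toLaurent_dvd hp hpX (by simpa using hu.dvd))
  · obtain ⟨m, A, hA⟩ := a.exists_T_pow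
    obtain ⟨n, B, hB⟩ := b.exists_T_pow
    have hAB : toLaurent (A * B) = a * b * T ↑(m + n) := by
      rw [map_mul, hA, hB, Nat.cast_add, T_add]
      ring
    rw [dvd_toLaurent_iff hA, dvd_toLaurent_iff hB]
    exact hp.dvd_or_dvd ((dvd_toLaurent_iff hAB).mp hab)

end Polynomial

theorem Associated.dvd_map_iff {M F : Type*} [CommMonoid M] [EquivLike F M M]
    [MulEquivClass F M M] {φ : F} {p : M} (hφ : Associated (φ p) p) {g : M} :
    p ∣ φ g ↔ p ∣ g :=
  hφ.dvd_iff_dvd_left.symm.trans (map_dvd_iff φ)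

theorem Prime.dvd_of_mul_eq_mul_mul_map {M F : Type*} [CommMonoidWithZero M]
    [IsCancelMulZero M] [EquivLike F M M] [MulEquivClass F M M] {φ : F} {P a c f : M}
    (hP : Prime P) (hφ : Associated (φ P) P) (hc : IsUnit c) (h : a * P = c * f * φ f) :
    P ∣ a := by
  have hPf : P ∣ f := by
    have hPcf : P ∣ c * (f * φ f) := ⟨a, by rw [← mul_assoc, ← h, mul_comm]⟩
    rcases hP.dvd_or_dvd (hc.dvd_mul_left.mp hPcf) with hf | hf
    exacts [hf, hφ.dvd_map_iff.mp hf]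
  have hPP : P * P ∣ a * P := by
    rw [h, mul_assoc]
    exact Dvd.dvd.mul_left (mul_dvd_mul hPf (hφ.dvd_map_iff.mpr hPf)) c
  exact (mul_dvd_mul_iff_right hP.ne_zero).mp hPP

theorem associated_map_toLaurent_three_five_three {R F : Type*} [CommRing R]
    [FunLike F R[T;T⁻¹] R[T;T⁻¹]] [RingHomClass F R[T;T⁻¹] R[T;T⁻¹]] {φ : F}
    (hφ : φ (T 1) = T (-1)) :
    Associated (φ (toLaurent (Polynomial.C 3 * X ^ 2 + Polynomial.C 5 * X + Polynomial.C 3)))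
      (toLaurent (Polynomial.C 3 * X ^ 2 + Polynomial.C 5 * X + Polynomial.C 3 : R[X])) := by
  have hφ2 : φ (T 2) = T (-2) := by
    rw [show (2 : ℤ) = 1 + 1 by norm_num, T_add, map_mul, hφ, ← T_add]
    norm_num
  refine ⟨(isUnit_T 2).unit, ?_⟩
  simp only [map_add, map_mul, toLaurent_X, toLaurent_X_pow, Nat.cast_ofNat, map_ofNat, hφ, hφ2,
    IsUnit.unit_spec]
  rw [add_mul, add_mul, mul_assoc, mul_assoc, ← T_add, ← T_add]
  norm_num
  ring

theorem stmt17_general (ζ : CyclotomicField 3 ℚ) (hζ : IsPrimitiveRoot ζ 3)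
    (conj : LaurentPolynomial (CyclotomicField 3 ℚ) ≃+*
            LaurentPolynomial (CyclotomicField 3 ℚ))
    (hconjT : conj (T 1) = T (-1)) :
    Irreducible (Polynomial.C 3 * X ^ 2 + Polynomial.C 5 * X + Polynomial.C 3 : Polynomial (CyclotomicField 3 ℚ)) ∧
    ¬ ∃ (lam : CyclotomicField 3 ℚ) (k : ℤ)
        (f : LaurentPolynomial (CyclotomicField 3 ℚ)),
        ((X - 1) ^ 2 * (Polynomial.C 3 * X ^ 2 + Polynomial.C 5 * X + Polynomial.C 3) :
            Polynomial (CyclotomicField 3 ℚ)).toLaurent =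
          LaurentPolynomial.C lam * T k * f * conj f := by
  set q : (CyclotomicField 3 ℚ)[X] := Polynomial.C 3 * X ^ 2 + Polynomial.C 5 * X + Polynomial.C 3
  have hq : Irreducible q :=
    irreducible_three_five_three finrank_cyclotomicField_three hζ.two_mul_add_one_sq
  have hq_not_dvd {r : (CyclotomicField 3 ℚ)[X]} (hr : r ≠ 0) (hdeg : r.natDegree < 2) :
      ¬q ∣ r :=
    not_dvd_of_natDegree_lt hr (by rwa [natDegree_quadratic three_ne_zero])
  have hX1 : (X - 1 : (CyclotomicField 3 ℚ)[X]) ≠ 0 := by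
    simpa using X_sub_C_ne_zero (1 : CyclotomicField 3 ℚ)
  have hqX : ¬q ∣ X := hq_not_dvd X_ne_zero (by simp)
  refine ⟨hq, fun ⟨lam, k, f, h⟩ => ?_⟩
  have hlam : lam ≠ 0 := by
    rintro rfl
    refine mul_ne_zero (pow_ne_zero 2 hX1) hq.ne_zero (toLaurent_eq_zero.mp ?_)
    rw [h, map_zero]
    ring
  have hq_dvd : toLaurent q ∣ toLaurent ((X - 1) ^ 2) :=
    (prime_toLaurent hq.prime hqX).dvd_of_mul_eq_mul_mul_map
      (associated_map_toLaurent_three_five_three hconjT)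
      ((hlam.isUnit.map LaurentPolynomial.C).mul (isUnit_T k)) (by rw [← map_mul, h])
  exact hq_not_dvd hX1 (by rw [← C_1, natDegree_X_sub_C]; norm_num)
    (hq.prime.dvd_of_dvd_pow (dvd_of_toLaurent_dvd hq.prime hqX hq_dvd))

/-- `3t² + 5t + 3` is irreducible over `Q(ζ_3)`; consequently `(t−1)²(3t²+5t+3)` is not a
norm `λ t^k f(t) f̄(t)` in `Q(ζ_3)[t,t⁻¹]`, where the involution sends `t ↦ t⁻¹` and
`ζ_3 ↦ ζ_3⁻¹`. -/
theorem stmt17 (ζ : CyclotomicField 3 ℚ) (hζ : IsPrimitiveRoot ζ 3)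
    (σ : CyclotomicField 3 ℚ ≃+* CyclotomicField 3 ℚ) (hσ : σ ζ = ζ⁻¹)
    (conj : LaurentPolynomial (CyclotomicField 3 ℚ) ≃+*
            LaurentPolynomial (CyclotomicField 3 ℚ))
    (hconjC : ∀ a, conj (LaurentPolynomial.C a) = LaurentPolynomial.C (σ a))
    (hconjT : conj (T 1) = T (-1)) :
    Irreducible (Polynomial.C 3 * X ^ 2 + Polynomial.C 5 * X + Polynomial.C 3 : Polynomial (CyclotomicField 3 ℚ)) ∧
    ¬ ∃ (lam : CyclotomicField 3 ℚ) (k : ℤ)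
        (f : LaurentPolynomial (CyclotomicField 3 ℚ)),
        ((X - 1) ^ 2 * (Polynomial.C 3 * X ^ 2 + Polynomial.C 5 * X + Polynomial.C 3) :
            Polynomial (CyclotomicField 3 ℚ)).toLaurent =
          LaurentPolynomial.C lam * T k * f * conj f :=
  stmt17_general ζ hζ conj hconjT
end QuadraticExtension
end
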